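/- arXiv:1308.1993 — 5 statements merged into one kernel-verified Lean document; each statement's English description precedes it below -/
import Mathlib

section
/- Let Ω ⊆ ℝⁿ be a nonempty closed hyper-rectangle and g : Ω → ℝⁿ a continuously differentiable map such that for every x ∈ Ω, ∂gᵢ/∂xⱼ(x) ≥ 0 for all i ≠ j, and ∑ᵢ ∂gᵢ/∂xⱼ(x) ≤ 0 for all j. Suppose in addition there exists an index j₀ such that ∑ᵢ ∂gᵢ/∂x_{j₀}(x) < 0 for all x ∈ Ω. Then for all x, y ∈ Ω with x_{j₀} ≠ y_{j₀}, ∑ᵢ sgn(xᵢ − yᵢ)(gᵢ(x) − gᵢ(y)) < 0. -/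
/-!
By the mean value theorem for `p ↦ ∑ i, sgn (x i - y i) * g p i`, the sum equals
`∑ i, sgn (v i) * (J v) i` with `v = x - y` and `J` the Jacobian of `g` at a point of the segment
`[y, x] ⊆ Ω`. Off-diagonal entries of `J` are nonnegative, so `sgn (v i) * v j * J i j ≤ |v j| * J i j`,
and the sum is at most `∑ j, |v j| * (column sum j of J)`, which is negative since `v j₀ ≠ 0`.
-/

open Finset Matrix

theorem Real.sign_mul_self_eq_abs (r : ℝ) : Real.sign r * r = |r| := by
  rcases lt_trichotomy r 0 with h | rfl | h
  · rw [Real.sign_of_neg h, abs_of_neg h, neg_one_mul]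
  · simp
  · rw [Real.sign_of_pos h, abs_of_pos h, one_mul]

theorem Real.sign_mul_le_abs (r s : ℝ) : Real.sign r * s ≤ |s| := by
  rcases Real.sign_apply_eq r with h | h | h <;> rw [h]
  · simpa using neg_le_abs s
  · simp
  · simpa using le_abs_self s

variable {ι : Type*} [Fintype ι]

theorem Matrix.sum_sign_mul_mulVec_le_sum_abs_mul_colSum (M : Matrix ι ι ℝ)
    (hoff : ∀ i j, i ≠ j → 0 ≤ M i j) (v : ι → ℝ) :
    ∑ i, Real.sign (v i) * (M *ᵥ v) i ≤ ∑ j, |v j| * ∑ i, M i j := by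
  have hterm : ∀ i j, Real.sign (v i) * (M i j * v j) ≤ |v j| * M i j := by
    intro i j
    rcases eq_or_ne i j with rfl | hij
    · rw [mul_left_comm, Real.sign_mul_self_eq_abs, mul_comm]
    · rw [mul_left_comm, mul_comm]
      exact mul_le_mul_of_nonneg_right (Real.sign_mul_le_abs _ _) (hoff i j hij)
  calc ∑ i, Real.sign (v i) * (M *ᵥ v) i
      = ∑ j, ∑ i, Real.sign (v i) * (M i j * v j) := by
        simp only [mulVec, dotProduct, mul_sum]
        exact sum_comm
    _ ≤ ∑ j, |v j| * ∑ i, M i j := by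
        simp only [mul_sum]
        exact sum_le_sum fun j _ => sum_le_sum fun i _ => hterm i j

theorem Matrix.sum_sign_mul_mulVec_neg (M : Matrix ι ι ℝ)
    (hoff : ∀ i j, i ≠ j → 0 ≤ M i j) (hcol : ∀ j, ∑ i, M i j ≤ 0)
    {j₀ : ι} (hj₀ : ∑ i, M i j₀ < 0) {v : ι → ℝ} (hv : v j₀ ≠ 0) :
    ∑ i, Real.sign (v i) * (M *ᵥ v) i < 0 := by
  refine (M.sum_sign_mul_mulVec_le_sum_abs_mul_colSum hoff v).trans_lt ?_
  rw [← sum_const_zero (s := (univ : Finset ι))]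
  exact sum_lt_sum (fun j _ => mul_nonpos_of_nonneg_of_nonpos (abs_nonneg _) (hcol j))
    ⟨j₀, mem_univ _, mul_neg_of_pos_of_neg (abs_pos.mpr hv) hj₀⟩

theorem exists_mem_segment_sum_mul_sub_eq {E : Type*} [NormedAddCommGroup E] [NormedSpace ℝ E]
    {g : E → ι → ℝ} (hg : Differentiable ℝ g) (w : ι → ℝ) (x y : E) :
    ∃ z ∈ segment ℝ y x, ∑ i, w i * (g x i - g y i) = ∑ i, w i * fderiv ℝ g z (x - y) i := by
  let ℓ : (ι → ℝ) →L[ℝ] ℝ := ∑ i, w i • ContinuousLinearMap.proj i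
  have hℓ : ∀ u, ℓ u = ∑ i, w i * u i := fun u => by simp [ℓ]
  obtain ⟨z, hz, h⟩ := domain_mvt (f := ℓ ∘ g) (s := Set.univ) (x := y) (y := x)
    (fun z _ => (ℓ.hasFDerivAt.comp z (hg z).hasFDerivAt).hasFDerivWithinAt)
    convex_univ trivial trivial
  refine ⟨z, hz, ?_⟩
  simpa [hℓ, mul_sub] using h

theorem stmt_1_general (n : ℕ) (a b : Fin n → ℝ)
    (Ω : Set (Fin n → ℝ)) (hΩ : Ω = Set.univ.pi fun i => Set.Icc (a i) (b i))
    (g : (Fin n → ℝ) → (Fin n → ℝ)) (hg : ContDiff ℝ 1 g)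
    (hcoop : ∀ x ∈ Ω, ∀ i j, i ≠ j → 0 ≤ fderiv ℝ g x (Pi.single j 1) i)
    (hcol : ∀ x ∈ Ω, ∀ j, ∑ i, fderiv ℝ g x (Pi.single j 1) i ≤ 0)
    (j₀ : Fin n)
    (hstrict : ∀ x ∈ Ω, ∑ i, fderiv ℝ g x (Pi.single j₀ 1) i < 0) :
    ∀ x ∈ Ω, ∀ y ∈ Ω, x j₀ ≠ y j₀ →
      ∑ i, Real.sign (x i - y i) * (g x i - g y i) < 0 := by
  intro x hx y hy hxy
  have hconv : Convex ℝ Ω := hΩ ▸ convex_pi fun i _ => convex_Icc (a i) (b i)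
  obtain ⟨z, hz, heq⟩ := exists_mem_segment_sum_mul_sub_eq (hg.differentiable one_ne_zero)
    (fun i => Real.sign (x i - y i)) x y
  have hzΩ : z ∈ Ω := hconv.segment_subset hy hx hz
  have hneg := Matrix.sum_sign_mul_mulVec_neg (LinearMap.toMatrix' (fderiv ℝ g z).toLinearMap)
    (hcoop z hzΩ) (hcol z hzΩ) (hstrict z hzΩ) (v := x - y) (sub_ne_zero.mpr hxy)
  rw [LinearMap.toMatrix'_mulVec] at hneg
  exact heq ▸ hneg

/-- Strict l1-contraction inequality under a strict column-sum condition
for one coordinate, for C¹ maps on a closed hyper-rectangle. -/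
theorem stmt_1 (n : ℕ) (a b : Fin n → ℝ)
    (Ω : Set (Fin n → ℝ)) (hΩ : Ω = Set.univ.pi fun i => Set.Icc (a i) (b i))
    (hne : Ω.Nonempty)
    (g : (Fin n → ℝ) → (Fin n → ℝ)) (hg : ContDiff ℝ 1 g)
    (hcoop : ∀ x ∈ Ω, ∀ i j, i ≠ j → 0 ≤ fderiv ℝ g x (Pi.single j 1) i)
    (hcol : ∀ x ∈ Ω, ∀ j, ∑ i, fderiv ℝ g x (Pi.single j 1) i ≤ 0)
    (j₀ : Fin n)
    (hstrict : ∀ x ∈ Ω, ∑ i, fderiv ℝ g x (Pi.single j₀ 1) i < 0) :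
    ∀ x ∈ Ω, ∀ y ∈ Ω, x j₀ ≠ y j₀ →
      ∑ i, Real.sign (x i - y i) * (g x i - g y i) < 0 :=
  stmt_1_general n a b Ω hΩ g hg hcoop hcol j₀ hstrict
end

section
/- Let g : ℝⁿ → ℝⁿ be Lipschitz with, almost everywhere, nonnegative off-diagonal partial derivatives (∂gᵢ/∂xⱼ ≥ 0 for i ≠ j) and nonpositive column sums (∑ᵢ ∂gᵢ/∂xⱼ ≤ 0 for all j). If x(t) and y(t) are two solutions of the ODE ż = g(z) defined on [0,T], then the function φ(t) := ‖x(t) − y(t)‖₁ is nonincreasing on [0,T]. -/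
/-!
For `h * K ≤ 1` the explicit Euler step `z ↦ z + h • g z` is nonexpansive for the l¹ distance.
Along almost every segment `s ↦ v + s • d`, the increment `g (v + d) - g v` is the average of
`Dg · d`, and `I + h Dg` has nonnegative entries and column sums at most `1`, so it is
l¹-nonexpansive; the "almost every" is removed by Fubini over translated segments and
continuity. Two solutions are tracked by one Euler step up to `o(h)`, so the right upper Dini
derivative of their l¹ distance is nonpositive, and the distance is nonincreasing.
-/

open MeasureTheory Filter Set Topology Matrix

theorem Matrix.sum_abs_mulVec_le {ι : Type*} [Fintype ι] {P : Matrix ι ι ℝ}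
    (hP : ∀ i j, 0 ≤ P i j) (hcol : ∀ j, ∑ i, P i j ≤ 1) (d : ι → ℝ) :
    ∑ i, |(P *ᵥ d) i| ≤ ∑ i, |d i| :=
  calc ∑ i, |(P *ᵥ d) i| ≤ ∑ i, ∑ j, P i j * |d j| := by
        refine Finset.sum_le_sum fun i _ => (Finset.abs_sum_le_sum_abs _ _).trans_eq ?_
        simp only [abs_mul, abs_of_nonneg (hP _ _)]
    _ = ∑ j, (∑ i, P i j) * |d j| := by
        rw [Finset.sum_comm]
        simp only [Finset.sum_mul]
    _ ≤ ∑ j, |d j| := Finset.sum_le_sum fun j _ =>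
        mul_le_of_le_one_left (abs_nonneg _) (hcol j)

theorem sum_abs_intervalIntegral_le {ι : Type*} [Fintype ι] {f : ℝ → ι → ℝ} {a b C : ℝ}
    (hab : a ≤ b) (hf : ∀ i, IntervalIntegrable (fun s => f s i) volume a b)
    (hC : ∀ᵐ s, ∑ i, |f s i| ≤ C) :
    ∑ i, |∫ s in a..b, f s i| ≤ (b - a) * C :=
  calc ∑ i, |∫ s in a..b, f s i| ≤ ∑ i, ∫ s in a..b, |f s i| :=
        Finset.sum_le_sum fun i _ => intervalIntegral.abs_integral_le_integral_abs hab
    _ = ∫ s in a..b, ∑ i, |f s i| :=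
        (intervalIntegral.integral_finsetSum fun i _ => (hf i).abs).symm
    _ ≤ ∫ _ in a..b, C :=
        intervalIntegral.integral_mono_ae hab
          (by simpa only [Finset.sum_fn] using IntervalIntegrable.sum _ fun i _ => (hf i).abs)
          intervalIntegrable_const hC
    _ = (b - a) * C := by simp

theorem MeasureTheory.ae_ae_add_smul {E : Type*} [NormedAddCommGroup E] [NormedSpace ℝ E]
    [MeasurableSpace E] [BorelSpace E] [SecondCountableTopology E] {μ : Measure E}
    [μ.IsAddRightInvariant] [SFinite μ] {P : E → Prop} (hP : ∀ᵐ z ∂μ, P z) (d : E) :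
    ∀ᵐ w ∂μ, ∀ᵐ s : ℝ, P (w + s • d) := by
  have hmap : Measure.QuasiMeasurePreserving (fun p : E × ℝ => p.1 + p.2 • d)
      (μ.prod volume) μ :=
    QuasiMeasurePreserving.prod_of_left (by fun_prop) <| ae_of_all _ fun s =>
      (measurePreserving_add_right μ (s • d)).quasiMeasurePreserving
  exact Measure.ae_ae_of_ae_prod (hmap.ae hP)

theorem Continuous.le_of_ae_le {X : Type*} [TopologicalSpace X] [MeasurableSpace X]
    {μ : Measure X} [μ.IsOpenPosMeasure] {f g : X → ℝ} (hf : Continuous f) (hg : Continuous g)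
    (h : ∀ᵐ x ∂μ, f x ≤ g x) : f ≤ g := by
  have : closure {x | f x ≤ g x} = univ := (Measure.dense_of_ae h).closure_eq
  rw [(isClosed_le hf hg).closure_eq] at this
  exact fun x => this.symm.subset (mem_univ x)

theorem antitoneOn_Icc_of_eventually_le_add {φ : ℝ → ℝ} {a b : ℝ}
    (hφ : ContinuousOn φ (Icc a b))
    (hφ' : ∀ τ ∈ Ico a b, ∀ r > 0, ∀ᶠ z in 𝓝[>] τ, φ z ≤ φ τ + r * (z - τ)) :
    AntitoneOn φ (Icc a b) := by
  intro t₁ ht₁ t₂ ht₂ h12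
  refine image_le_of_liminf_slope_right_le_deriv_boundary (B := fun _ => φ t₁) (B' := fun _ => 0)
    (hφ.mono (Icc_subset_Icc ht₁.1 ht₂.2)) le_rfl continuousOn_const
    (fun τ _ => hasDerivWithinAt_const τ _ _) (fun τ hτ r hr => ?_) ⟨h12, le_rfl⟩
  have hτ' : τ ∈ Ico a b := ⟨ht₁.1.trans hτ.1, hτ.2.trans_le ht₂.2⟩
  refine Eventually.frequently ?_
  filter_upwards [self_mem_nhdsWithin, hφ' τ hτ' (r / 2) (half_pos hr)] with z hz hle
  have hz' : 0 < z - τ := sub_pos.2 hz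
  rw [slope_def_field, div_lt_iff₀ hz']
  nlinarith

theorem eventually_sum_abs_sub_le_add_of_hasDerivAt {ι : Type*} [Fintype ι]
    {g : (ι → ℝ) → ι → ℝ}
    (hstep : ∀ᶠ h in 𝓝[>] (0 : ℝ), ∀ u v : ι → ℝ,
      ∑ i, |u i - v i + h * (g u i - g v i)| ≤ ∑ i, |u i - v i|)
    {x y : ℝ → ι → ℝ} {τ : ℝ} (hx : HasDerivAt x (g (x τ)) τ) (hy : HasDerivAt y (g (y τ)) τ)
    {r : ℝ} (hr : 0 < r) :
    ∀ᶠ z in 𝓝[>] τ, ∑ i, |x z i - y z i| ≤ ∑ i, |x τ i - y τ i| + r * (z - τ) := by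
  set N : ℝ := Fintype.card ι + 1
  have hN : 0 < N := by positivity
  have hshift : Tendsto (fun z => z - τ) (𝓝[>] τ) (𝓝[>] 0) :=
    tendsto_nhdsWithin_of_tendsto_nhds_of_eventually_within _
      ((continuous_sub_right τ).tendsto' τ 0 (sub_self τ) |>.mono_left nhdsWithin_le_nhds)
      (by filter_upwards [self_mem_nhdsWithin] with z hz using sub_pos.2 (mem_Ioi.1 hz))
  have hrem := (hasDerivAt_iff_isLittleO.1 (hx.sub hy)).def (div_pos hr hN)
  filter_upwards [self_mem_nhdsWithin, hshift.eventually hstep, nhdsWithin_le_nhds hrem]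
    with z hz hstep_z hrem_z
  set R := (x - y) z - (x - y) τ - (z - τ) • (g (x τ) - g (y τ))
  have hsplit : ∀ i, x z i - y z i
      = (x τ i - y τ i + (z - τ) * (g (x τ) i - g (y τ) i)) + R i := by
    intro i
    simp only [R, Pi.sub_apply, Pi.smul_apply, smul_eq_mul]
    ring
  have hR : ∑ i, |R i| ≤ r * (z - τ) := by
    have hz' : 0 < z - τ := sub_pos.2 hz
    rw [Real.norm_of_nonneg hz'.le] at hrem_z
    calc ∑ i, |R i| ≤ Fintype.card ι * ‖R‖ := by
          simpa using Pi.sum_norm_apply_le_norm R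
      _ ≤ N * (r / N * (z - τ)) := by
          gcongr
          linarith
      _ = r * (z - τ) := by field_simp
  calc ∑ i, |x z i - y z i|
      ≤ ∑ i, |x τ i - y τ i + (z - τ) * (g (x τ) i - g (y τ) i)| + ∑ i, |R i| := by
        simp only [hsplit, ← Finset.sum_add_distrib]
        exact Finset.sum_le_sum fun i _ => abs_add_le _ _
    _ ≤ ∑ i, |x τ i - y τ i| + r * (z - τ) := add_le_add (hstep_z _ _) hR

section Compartmental

variable {ι : Type*} [Fintype ι] [DecidableEq ι]

/-- `A (Pi.single j 1) i` is the `(i, j)` entry of the matrix of `A`: it is Metzler with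
nonpositive column sums. -/
def IsCompartmental (A : (ι → ℝ) →L[ℝ] (ι → ℝ)) : Prop :=
  (∀ i j, i ≠ j → 0 ≤ A (Pi.single j 1) i) ∧ ∀ j, ∑ i, A (Pi.single j 1) i ≤ 0

theorem IsCompartmental.sum_abs_add_mul_apply_le {A : (ι → ℝ) →L[ℝ] (ι → ℝ)}
    (hA : IsCompartmental A) {h : ℝ} (h0 : 0 ≤ h) (hh : h * ‖A‖ ≤ 1) (d : ι → ℝ) :
    ∑ i, |d i + h * A d i| ≤ ∑ i, |d i| := by
  set P : Matrix ι ι ℝ := 1 + h • LinearMap.toMatrix' (A : (ι → ℝ) →ₗ[ℝ] (ι → ℝ))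
  have hPd : ∀ i, (P *ᵥ d) i = d i + h * A d i := by
    simp [P, Matrix.add_mulVec, Matrix.smul_mulVec]
  have hP : ∀ i j, 0 ≤ P i j := by
    intro i j
    obtain rfl | hij := eq_or_ne i j
    · have hdiag : |A (Pi.single i 1) i| ≤ ‖A‖ := by
        simpa [Pi.norm_single] using
          (norm_le_pi_norm (A (Pi.single i 1)) i).trans (A.le_opNorm (Pi.single i 1))
      have := mul_le_mul_of_nonneg_left (neg_le_of_abs_le hdiag) h0
      simp only [P, Matrix.add_apply, Matrix.one_apply_eq, Matrix.smul_apply,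
        LinearMap.toMatrix'_apply, smul_eq_mul, ContinuousLinearMap.coe_coe]
      linarith
    · simpa [P, Matrix.one_apply_ne hij, LinearMap.toMatrix'_apply] using
        mul_nonneg h0 (hA.1 i j hij)
  have hcol : ∀ j, ∑ i, P i j ≤ 1 := by
    intro j
    simpa [P, Matrix.one_apply, LinearMap.toMatrix'_apply, Finset.sum_add_distrib,
      ← Finset.mul_sum] using mul_nonpos_of_nonneg_of_nonpos h0 (hA.2 j)
  simpa only [hPd] using Matrix.sum_abs_mulVec_le hP hcol d

variable {K : NNReal} {g : (ι → ℝ) → ι → ℝ}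

theorem sum_abs_euler_step_le_of_ae_segment (hg : LipschitzWith K g) {h : ℝ} (h0 : 0 ≤ h)
    (hK : h * K ≤ 1) {v d : ι → ℝ}
    (hseg : ∀ᵐ s : ℝ, DifferentiableAt ℝ g (v + s • d) ∧
      IsCompartmental (fderiv ℝ g (v + s • d))) :
    ∑ i, |d i + h * (g (v + d) i - g v i)| ≤ ∑ i, |d i| := by
  set F : ι → ℝ → ℝ := fun i s => g (v + s • d) i
  have hF : ∀ i, AbsolutelyContinuousOnInterval (F i) 0 1 := fun i =>
    (((LipschitzWith.eval i).comp hg).comp ((LipschitzWith.const v).add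
      (ContinuousLinearMap.smulRight (1 : ℝ →L[ℝ] ℝ) d).lipschitz)
      ).lipschitzOnWith.absolutelyContinuousOnInterval
  have hF' : ∀ᵐ s : ℝ, (fun i => deriv (F i) s) = fderiv ℝ g (v + s • d) d := by
    filter_upwards [hseg] with s hs
    have hline : HasDerivAt (fun t : ℝ => v + t • d) d s := by
      simpa using ((hasDerivAt_id s).smul_const d).const_add v
    funext i
    exact (hasDerivAt_pi.1 (hs.1.hasFDerivAt.comp_hasDerivAt s hline) i).deriv
  have hint : ∀ i, IntervalIntegrable (fun s => d i + h * deriv (F i) s) volume 0 1 := fun i =>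
    intervalIntegrable_const.add ((hF i).intervalIntegrable_deriv.const_mul h)
  have hrepr : ∀ i,
      d i + h * (g (v + d) i - g v i) = ∫ s in (0 : ℝ)..1, d i + h * deriv (F i) s := by
    intro i
    rw [intervalIntegral.integral_add intervalIntegrable_const
      ((hF i).intervalIntegrable_deriv.const_mul h), intervalIntegral.integral_const_mul,
      (hF i).integral_deriv_eq_sub]
    simp [F]
  have hbound : ∀ᵐ s : ℝ, ∑ i, |d i + h * deriv (F i) s| ≤ ∑ i, |d i| := by
    filter_upwards [hseg, hF'] with s hs hs'
    have hnorm : h * ‖fderiv ℝ g (v + s • d)‖ ≤ 1 :=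
      (mul_le_mul_of_nonneg_left (norm_fderiv_le_of_lipschitz ℝ hg) h0).trans hK
    simpa only [← hs'] using hs.2.sum_abs_add_mul_apply_le h0 hnorm d
  simpa [hrepr] using sum_abs_intervalIntegral_le zero_le_one hint hbound

theorem sum_abs_euler_step_le (hg : LipschitzWith K g)
    (hae : ∀ᵐ z, DifferentiableAt ℝ g z ∧ IsCompartmental (fderiv ℝ g z))
    {h : ℝ} (h0 : 0 ≤ h) (hK : h * K ≤ 1) (u v : ι → ℝ) :
    ∑ i, |u i - v i + h * (g u i - g v i)| ≤ ∑ i, |u i - v i| := by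
  set d := u - v
  -- The segment from `v` to `u` may lie in the null set where `hae` fails; its translates by
  -- almost every `w` do not.
  have hae_w : ∀ᵐ w, ∑ i, |d i + h * (g (w + d) i - g w i)| ≤ ∑ i, |d i| := by
    filter_upwards [ae_ae_add_smul hae d] with w hw
    exact sum_abs_euler_step_le_of_ae_segment hg h0 hK hw
  have hcont : Continuous fun w => ∑ i, |d i + h * (g (w + d) i - g w i)| := by
    have := hg.continuous
    fun_prop
  simpa [d] using Continuous.le_of_ae_le hcont continuous_const hae_w v

theorem eventually_sum_abs_euler_step_le (hg : LipschitzWith K g)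
    (hae : ∀ᵐ z, DifferentiableAt ℝ g z ∧ IsCompartmental (fderiv ℝ g z)) :
    ∀ᶠ h in 𝓝[>] (0 : ℝ), ∀ u v : ι → ℝ,
      ∑ i, |u i - v i + h * (g u i - g v i)| ≤ ∑ i, |u i - v i| := by
  have hK : ∀ᶠ h : ℝ in 𝓝[>] 0, h * K < 1 := nhdsWithin_le_nhds <|
    (continuous_mul_const (K : ℝ)).tendsto' 0 0 (zero_mul _) |>.eventually_lt_const one_pos
  filter_upwards [self_mem_nhdsWithin, hK] with h h0 hK
  exact sum_abs_euler_step_le hg hae (le_of_lt h0) hK.le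

end Compartmental

/-- l1-contraction principle for monotone compartmental systems: the l¹
distance between two solutions is nonincreasing. -/
theorem stmt_3 (n : ℕ) (K : NNReal)
    (g : (Fin n → ℝ) → (Fin n → ℝ)) (hg : LipschitzWith K g)
    (hae : ∀ᵐ x : (Fin n → ℝ) ∂volume,
      DifferentiableAt ℝ g x ∧
      (∀ i j, i ≠ j → 0 ≤ fderiv ℝ g x (Pi.single j 1) i) ∧
      (∀ j, ∑ i, fderiv ℝ g x (Pi.single j 1) i ≤ 0))
    (T : ℝ) (x y : ℝ → Fin n → ℝ)
    (hx : ∀ t ∈ Set.Icc (0 : ℝ) T, HasDerivAt x (g (x t)) t)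
    (hy : ∀ t ∈ Set.Icc (0 : ℝ) T, HasDerivAt y (g (y t)) t) :
    AntitoneOn (fun t => ∑ i, |x t i - y t i|) (Set.Icc (0 : ℝ) T) := by
  refine antitoneOn_Icc_of_eventually_le_add (fun t ht => ?_) fun τ hτ r hr => ?_
  · have hl1 : Continuous fun v : Fin n → ℝ => ∑ i, |v i| := by fun_prop
    exact (hl1.continuousAt.comp
      ((hx t ht).continuousAt.sub (hy t ht).continuousAt)).continuousWithinAt
  · exact eventually_sum_abs_sub_le_add_of_hasDerivAt
      (eventually_sum_abs_euler_step_le hg hae) (hx τ (Ico_subset_Icc_self hτ))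
      (hy τ (Ico_subset_Icc_self hτ)) hr
end

section
/- Let g : ℝⁿ → ℝⁿ be a Lipschitz vector field with nonnegative off-diagonal partial derivatives almost everywhere (∂gᵢ/∂xⱼ(x) ≥ 0 for all i ≠ j, a.e. x). If x(t), y(t) are solutions of ż = g(z) on [0,T] with x(0) ≤ y(0) componentwise, then x(t) ≤ y(t) componentwise for all t ∈ [0,T]. -/
/-!
The sign condition on the Jacobian only holds almost everywhere, so it is first turned into a
pointwise one. Averaging `g · i` over a small ball `closedBall 0 ε` gives a function that is
differentiable along every direction `d ≥ 0` with `d i = 0`, with nonnegative derivative, and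
that is `K ε`-close to `g · i`; letting `ε → 0` yields Kamke's quasimonotonicity condition
`u ≤ v → u i = v i → g u i ≤ g v i`.

Comparing `x ⊓ y` with `y`, quasimonotonicity and the Lipschitz bound show that the upper right Dini
derivative of `f = ∑ i, (x i - y i)⁺` is at most `n K f`. Since `f 0 = 0`, Grönwall's inequality
gives `f = 0` on `[0, T]`.
-/

open MeasureTheory Set Filter Topology Metric
open scoped NNReal

-- `limsup (slope f t) (𝓝[>] t) ≤ B`, phrased without `limsup`, which is junk for unbounded slopes.
def UpperRightDiniLE (f : ℝ → ℝ) (t B : ℝ) : Prop :=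
  ∀ r, B < r → ∀ᶠ z in 𝓝[>] t, slope f t z < r

namespace UpperRightDiniLE

theorem add {f₁ f₂ : ℝ → ℝ} {t B₁ B₂ : ℝ} (h₁ : UpperRightDiniLE f₁ t B₁)
    (h₂ : UpperRightDiniLE f₂ t B₂) : UpperRightDiniLE (f₁ + f₂) t (B₁ + B₂) := by
  intro r hr
  filter_upwards [h₁ (B₁ + (r - B₁ - B₂) / 2) (by linarith),
    h₂ (B₂ + (r - B₁ - B₂) / 2) (by linarith)] with z hz₁ hz₂
  have : slope (f₁ + f₂) t z = slope f₁ t z + slope f₂ t z := by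
    simp only [slope_def_module, Pi.add_apply, add_sub_add_comm, smul_add]
  linarith

theorem sum {ι : Type*} {s : Finset ι} {f : ι → ℝ → ℝ} {t : ℝ} {B : ι → ℝ}
    (h : ∀ i ∈ s, UpperRightDiniLE (f i) t (B i)) :
    UpperRightDiniLE (fun x => ∑ i ∈ s, f i x) t (∑ i ∈ s, B i) := by
  classical
  rw [← Finset.sum_fn]
  induction s using Finset.induction_on with
  | empty =>
    intro r hr
    filter_upwards with z
    simpa [slope_def_module] using hr
  | insert i s hi ih =>
    rw [Finset.sum_insert hi, Finset.sum_insert hi]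
    exact (h i (Finset.mem_insert_self i s)).add
      (ih fun j hj => h j (Finset.mem_insert_of_mem hj))

end UpperRightDiniLE

theorem HasDerivAt.upperRightDiniLE {f : ℝ → ℝ} {f' t : ℝ} (hf : HasDerivAt f f' t) :
    UpperRightDiniLE f t f' := fun _ hr =>
  (hf.tendsto_slope.mono_left (nhdsWithin_mono t fun _ hz => ne_of_gt hz)).eventually_lt_const hr

theorem HasDerivAt.upperRightDiniLE_posPart {u : ℝ → ℝ} {u' t B : ℝ} (hu : HasDerivAt u u' t)
    (hB : 0 ≤ B) (hu' : 0 ≤ u t → u' ≤ B) : UpperRightDiniLE (fun s => (u s)⁺) t B := by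
  intro r hr
  rcases lt_or_ge (u t) 0 with hneg | hnonneg
  · filter_upwards [nhdsWithin_le_nhds (hu.continuousAt.eventually_lt continuousAt_const hneg)]
      with z hz
    simpa [slope_def_module, posPart_eq_zero.2 hz.le, posPart_eq_zero.2 hneg.le] using
      hB.trans_lt hr
  · filter_upwards [hu.upperRightDiniLE r ((hu' hnonneg).trans_lt hr), self_mem_nhdsWithin]
      with z hz hzt
    have hzt : 0 < z - t := sub_pos.2 hzt
    rw [slope_def_field, div_lt_iff₀ hzt] at hz ⊢
    rw [posPart_eq_self.2 hnonneg]
    rcases le_total 0 (u z) with hz₀ | hz₀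
    · rwa [posPart_eq_self.2 hz₀]
    · rw [posPart_eq_zero.2 hz₀]
      nlinarith

theorem nonpos_of_upperRightDiniLE_mul_self {f : ℝ → ℝ} {C a b : ℝ}
    (hf : ContinuousOn f (Icc a b)) (ha : f a ≤ 0)
    (hD : ∀ t ∈ Ico a b, UpperRightDiniLE f t (C * f t)) : ∀ t ∈ Icc a b, f t ≤ 0 := by
  intro t ht
  simpa [gronwallBound_ε0_δ0] using le_gronwallBound_of_liminf_deriv_right_le hf
    (fun t ht r hr => (hD t ht r hr).frequently) ha (fun t _ => (add_zero _).ge) t ht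

namespace LipschitzWith

variable {E : Type*} [NormedAddCommGroup E] [MeasurableSpace E] [BorelSpace E]
  {μ : Measure E} {F : E → ℝ} {K : ℝ≥0}

theorem hasDerivAt_setIntegral_comp_add_smul [NormedSpace ℝ E] [μ.IsAddLeftInvariant]
    [IsFiniteMeasureOnCompacts μ] (hF : LipschitzWith K F)
    (hdiff : ∀ᵐ x ∂μ, DifferentiableAt ℝ F x) (u d : E) {s : Set E} (hs : IsCompact s) (t₀ : ℝ) :
    HasDerivAt (fun t : ℝ => ∫ y in s, F (u + t • d + y) ∂μ)
      (∫ y in s, fderiv ℝ F (u + t₀ • d + y) d ∂μ) t₀ := by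
  have hcont (t : ℝ) : Continuous fun y => F (u + t • d + y) :=
    hF.continuous.comp (continuous_const_add _)
  have hlip (y : E) : LipschitzWith (K * ‖d‖₊) fun t : ℝ => F (u + t • d + y) := by
    refine hF.comp (LipschitzWith.of_dist_le_mul fun t₁ t₂ => ?_)
    simp [dist_eq_norm, ← sub_smul, norm_smul, mul_comm]
  have hline (y : E) : HasDerivAt (fun t : ℝ => u + t • d + y) d t₀ := by
    simpa using (((hasDerivAt_id t₀).smul_const d).const_add u).add_const y
  have hdiff' : ∀ᵐ y ∂μ.restrict s, DifferentiableAt ℝ F (u + t₀ • d + y) :=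
    ae_restrict_of_ae ((measurePreserving_add_left μ _).quasiMeasurePreserving.ae hdiff)
  refine (hasDerivAt_integral_of_dominated_loc_of_lip (bound := fun _ => ((K * ‖d‖₊ : ℝ≥0) : ℝ))
    univ_mem (Eventually.of_forall fun t => (hcont t).aestronglyMeasurable)
    ((hcont t₀).continuousOn.integrableOn_compact hs)
    ((measurable_fderiv_apply_const ℝ F d).comp (measurable_const_add _)).aestronglyMeasurable
    (Eventually.of_forall fun y => ?_) (integrableOn_const hs.measure_lt_top.ne) ?_).2
  · rw [Real.nnabs_coe]
    exact (hlip y).lipschitzOnWith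
  · filter_upwards [hdiff'] with y hy
    exact hy.hasFDerivAt.comp_hasDerivAt t₀ (hline y)

theorem monotone_setIntegral_comp_add_smul [NormedSpace ℝ E] [μ.IsAddLeftInvariant]
    [IsFiniteMeasureOnCompacts μ] (hF : LipschitzWith K F) {d : E}
    (hd : ∀ᵐ x ∂μ, DifferentiableAt ℝ F x ∧ 0 ≤ fderiv ℝ F x d) (u : E) {s : Set E}
    (hs : IsCompact s) : Monotone fun t : ℝ => ∫ y in s, F (u + t • d + y) ∂μ := by
  refine monotone_of_hasDerivAt_nonneg
    (hF.hasDerivAt_setIntegral_comp_add_smul (hd.mono fun _ hx => hx.1) u d hs) fun t => ?_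
  refine integral_nonneg_of_ae (ae_restrict_of_ae ?_)
  filter_upwards [(measurePreserving_add_left μ (u + t • d)).quasiMeasurePreserving.ae hd]
    with y hy using hy.2

theorem abs_setIntegral_closedBall_sub_le [IsFiniteMeasureOnCompacts μ] [ProperSpace E]
    (hF : LipschitzWith K F) (c : E) (ε : ℝ) :
    |∫ y in closedBall 0 ε, F (c + y) ∂μ - μ.real (closedBall 0 ε) * F c| ≤
      K * ε * μ.real (closedBall 0 ε) := by
  have hs : μ (closedBall 0 ε) < ⊤ := (isCompact_closedBall 0 ε).measure_lt_top
  have hint : IntegrableOn (fun y => F (c + y)) (closedBall 0 ε) μ :=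
    (hF.continuous.comp (continuous_const_add c)).continuousOn.integrableOn_compact
      (isCompact_closedBall 0 ε)
  rw [← Real.norm_eq_abs, ← smul_eq_mul, ← setIntegral_const,
    ← integral_sub hint (integrableOn_const hs.ne)]
  refine norm_setIntegral_le_of_norm_le_const hs fun y hy => ?_
  calc ‖F (c + y) - F c‖ = dist (F (c + y)) (F c) := (dist_eq_norm _ _).symm
    _ ≤ K * dist (c + y) c := hF.dist_le_mul _ _
    _ ≤ K * ε := by
      gcongr
      simpa using hy

theorem le_add_of_ae_fderiv_nonneg [NormedSpace ℝ E] [FiniteDimensional ℝ E]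
    [μ.IsAddHaarMeasure] (hF : LipschitzWith K F) {d : E}
    (hd : ∀ᵐ x ∂μ, DifferentiableAt ℝ F x ∧ 0 ≤ fderiv ℝ F x d) (u : E) : F u ≤ F (u + d) := by
  suffices h : ∀ ε > 0, F u ≤ F (u + d) + 2 * K * ε by
    have hlim : Tendsto (fun ε => F (u + d) + 2 * K * ε) (𝓝[>] 0) (𝓝 (F (u + d))) :=
      tendsto_nhdsWithin_of_tendsto_nhds (Continuous.tendsto' (by fun_prop) 0 _ (by simp))
    exact ge_of_tendsto hlim (eventually_nhdsWithin_of_forall h)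
  intro ε hε
  have hM : 0 < μ.real (closedBall 0 ε) :=
    ENNReal.toReal_pos (measure_closedBall_pos μ 0 hε).ne' measure_closedBall_lt_top.ne
  have h01 := hF.monotone_setIntegral_comp_add_smul hd u (isCompact_closedBall 0 ε) zero_le_one
  have h0 := abs_le.1 (hF.abs_setIntegral_closedBall_sub_le (μ := μ) u ε)
  have h1 := abs_le.1 (hF.abs_setIntegral_closedBall_sub_le (μ := μ) (u + d) ε)
  simp only [zero_smul, add_zero, one_smul] at h01
  have : μ.real (closedBall 0 ε) * F u ≤ μ.real (closedBall 0 ε) * (F (u + d) + 2 * K * ε) := by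
    linarith
  exact le_of_mul_le_mul_left this hM

end LipschitzWith

theorem ContinuousLinearMap.apply_nonneg_of_offDiag_nonneg {ι : Type*} [Fintype ι]
    [DecidableEq ι] (L : (ι → ℝ) →L[ℝ] ι → ℝ) {i : ι}
    (hL : ∀ j, i ≠ j → 0 ≤ L (Pi.single j 1) i) {d : ι → ℝ} (hd : 0 ≤ d) (hdi : d i = 0) :
    0 ≤ L d i := by
  rw [← Finset.univ_sum_single d, map_sum, Finset.sum_apply]
  refine Finset.sum_nonneg fun j _ => ?_
  rw [show Pi.single j (d j) = d j • Pi.single j (1 : ℝ) by simp [← Pi.single_smul'],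
    map_smul, Pi.smul_apply, smul_eq_mul]
  rcases eq_or_ne i j with rfl | hij
  · simp [hdi]
  · exact mul_nonneg (hd j) (hL j hij)

def IsQuasimonotone {ι : Type*} (g : (ι → ℝ) → ι → ℝ) : Prop :=
  ∀ ⦃u v : ι → ℝ⦄, u ≤ v → ∀ i, u i = v i → g u i ≤ g v i

theorem isQuasimonotone_of_ae_offDiag_fderiv_nonneg {ι : Type*} [Fintype ι] [DecidableEq ι]
    {g : (ι → ℝ) → ι → ℝ} {K : ℝ≥0} {μ : Measure (ι → ℝ)} [μ.IsAddHaarMeasure]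
    (hg : LipschitzWith K g)
    (hcoop : ∀ᵐ x ∂μ, DifferentiableAt ℝ g x ∧
      ∀ i j, i ≠ j → 0 ≤ fderiv ℝ g x (Pi.single j 1) i) :
    IsQuasimonotone g := by
  intro u v huv i hi
  have hgi : LipschitzWith K fun z => g z i := by
    rw [← one_mul K]
    exact (LipschitzWith.eval i).comp hg
  suffices hd : ∀ᵐ x ∂μ, DifferentiableAt ℝ (fun z => g z i) x ∧
      0 ≤ fderiv ℝ (fun z => g z i) x (v - u) by
    simpa using hgi.le_add_of_ae_fderiv_nonneg hd u
  filter_upwards [hcoop] with x ⟨hdiff, hoff⟩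
  have hderiv :
      HasFDerivAt (fun z => g z i) ((ContinuousLinearMap.proj i).comp (fderiv ℝ g x)) x :=
    hasFDerivAt_pi'.1 hdiff.hasFDerivAt i
  refine ⟨hderiv.differentiableAt, ?_⟩
  rw [hderiv.fderiv]
  exact (fderiv ℝ g x).apply_nonneg_of_offDiag_nonneg (hoff i) (sub_nonneg.2 huv)
    (by simp [hi])

namespace IsQuasimonotone

variable {ι : Type*} [Fintype ι] {g : (ι → ℝ) → ι → ℝ} {K : ℝ≥0}

theorem sub_le_mul_sum_posPart (hq : IsQuasimonotone g) (hg : LipschitzWith K g)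
    {a b : ι → ℝ} {i : ι} (hi : b i ≤ a i) : g a i - g b i ≤ K * ∑ j, (a j - b j)⁺ := by
  have hpos (j : ι) : (a - a ⊓ b) j = (a j - b j)⁺ := by
    simp [sub_inf, posPart, sup_comm]
  have hmono : g (a ⊓ b) i ≤ g b i := hq inf_le_right i (inf_eq_right.2 hi)
  have hlip : g a i - g (a ⊓ b) i ≤ K * ‖a - a ⊓ b‖ := by
    calc g a i - g (a ⊓ b) i ≤ dist (g a i) (g (a ⊓ b) i) := le_abs_self _
      _ ≤ dist (g a) (g (a ⊓ b)) := dist_le_pi_dist _ _ i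
      _ ≤ K * dist a (a ⊓ b) := hg.dist_le_mul _ _
      _ = K * ‖a - a ⊓ b‖ := by rw [dist_eq_norm]
  have hnorm : ‖a - a ⊓ b‖ ≤ ∑ j, (a j - b j)⁺ := by
    refine (pi_norm_le_iff_of_nonneg (Finset.sum_nonneg fun j _ => posPart_nonneg _)).2
      fun j => ?_
    rw [hpos, Real.norm_of_nonneg (posPart_nonneg _)]
    exact Finset.single_le_sum (fun j _ => posPart_nonneg (a j - b j)) (Finset.mem_univ j)
  linarith [mul_le_mul_of_nonneg_left hnorm K.coe_nonneg]

theorem le_of_hasDerivAt (hq : IsQuasimonotone g) (hg : LipschitzWith K g) {a b : ℝ}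
    {x y : ℝ → ι → ℝ} (hx : ∀ t ∈ Icc a b, HasDerivAt x (g (x t)) t)
    (hy : ∀ t ∈ Icc a b, HasDerivAt y (g (y t)) t) (ha : x a ≤ y a) :
    ∀ t ∈ Icc a b, x t ≤ y t := by
  set f : ℝ → ℝ := fun t => ∑ i, (x t i - y t i)⁺ with hf
  have hdiff (t) (ht : t ∈ Icc a b) (i : ι) :
      HasDerivAt (fun s => x s i - y s i) (g (x t) i - g (y t) i) t :=
    (hasDerivAt_pi.1 (hx t ht) i).sub (hasDerivAt_pi.1 (hy t ht) i)
  have hcont : ContinuousOn f (Icc a b) := continuousOn_finsetSum _ fun i _ t ht =>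
    ((hdiff t ht i).continuousAt.sup continuousAt_const).continuousWithinAt
  have hfa : f a ≤ 0 :=
    (Finset.sum_eq_zero fun i _ => posPart_eq_zero.2 (sub_nonpos.2 (ha i))).le
  have hdini (t) (ht : t ∈ Ico a b) : UpperRightDiniLE f t (Fintype.card ι * K * f t) := by
    have := UpperRightDiniLE.sum (s := Finset.univ) fun i _ =>
      (hdiff t (Ico_subset_Icc_self ht) i).upperRightDiniLE_posPart
        (mul_nonneg K.coe_nonneg (Finset.sum_nonneg fun j _ => posPart_nonneg _))
        fun hi => hq.sub_le_mul_sum_posPart hg (sub_nonneg.1 hi)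
    simpa [hf, mul_assoc] using this
  intro t ht i
  have hft := nonpos_of_upperRightDiniLE_mul_self hcont hfa hdini t ht
  have hterm : (x t i - y t i)⁺ ≤ f t :=
    Finset.single_le_sum (fun j _ => posPart_nonneg (x t j - y t j)) (Finset.mem_univ i)
  linarith [le_posPart (x t i - y t i)]

end IsQuasimonotone

/-- Kamke's comparison theorem for cooperative systems: componentwise order is
preserved along solutions. -/
theorem stmt_4 (n : ℕ) (K : NNReal)
    (g : (Fin n → ℝ) → (Fin n → ℝ)) (hg : LipschitzWith K g)
    (hae : ∀ᵐ x : (Fin n → ℝ) ∂volume,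
      DifferentiableAt ℝ g x ∧
      ∀ i j, i ≠ j → 0 ≤ fderiv ℝ g x (Pi.single j 1) i)
    (T : ℝ) (x y : ℝ → Fin n → ℝ)
    (hx : ∀ t ∈ Set.Icc (0 : ℝ) T, HasDerivAt x (g (x t)) t)
    (hy : ∀ t ∈ Set.Icc (0 : ℝ) T, HasDerivAt y (g (y t)) t)
    (h0 : ∀ i, x 0 i ≤ y 0 i) :
    ∀ t ∈ Set.Icc (0 : ℝ) T, ∀ i, x t i ≤ y t i :=
  (isQuasimonotone_of_ae_offDiag_fderiv_nonneg hg hae).le_of_hasDerivAt hg hx hy h0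
end

section
/- Let g : ℝⁿ → ℝⁿ be a Lipschitz cooperative vector field whose flow preserves the componentwise order, and suppose the trajectory x(t) = φᵗ(x₀) is bounded and its forward orbit closure is contained in the domain. If ‖φᵗ(x) − φᵗ(y)‖₁ is nonincreasing in t for all x, y, and strictly decreasing unless φᵗ(x) = φᵗ(y), and x* is an equilibrium of g, then every bounded solution converges to x*: lim_{t→∞} φᵗ(x₀) = x* for every initial condition x₀ whose trajectory is bounded with compact closure in the domain. -/
open Filter Topology Set

/-!
The Lyapunov function `V z = ‖z - x*‖₁` is nonincreasing along the bounded orbit of `x₀`,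
so it converges to some `L`. Every ω-limit point `z` of the orbit has `V z = L`, and so does
`φ 1 z`, which is again an ω-limit point. Strict contraction towards the fixed point `x*` then
forces `z = x*`; a precompact orbit whose only ω-limit point is `x*` converges to `x*`.
-/

theorem MapClusterPt.eq_of_tendsto {α X : Type*} [TopologicalSpace X] [T2Space X]
    {F : Filter α} {u : α → X} {x y : X} (hx : MapClusterPt x F u) (hy : Tendsto u F (𝓝 y)) :
    x = y := by
  by_contra hne
  have : ClusterPt x (𝓝 y) := hx.clusterPt.mono hy
  exact this.ne (disjoint_nhds_nhds.2 hne).eq_bot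

theorem AntitoneOn.exists_tendsto_atTop {α β : Type*} [LinearOrder α]
    [ConditionallyCompleteLinearOrder β] [TopologicalSpace β] [OrderTopology β]
    {f : α → β} {a : α} (hf : AntitoneOn f (Ici a)) (hbdd : BddBelow (f '' Ici a)) :
    ∃ L, Tendsto f atTop (𝓝 L) := by
  have hanti : Antitone (fun t => f (max t a)) := fun s t hst =>
    hf (le_max_right s a) (le_max_right t a) (max_le_max hst le_rfl)
  have hbdd' : BddBelow (range fun t => f (max t a)) :=
    hbdd.mono (range_subset_iff.2 fun t => mem_image_of_mem f (le_max_right t a))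
  refine ⟨_, (tendsto_atTop_ciInf hanti hbdd').congr' ?_⟩
  filter_upwards [eventually_ge_atTop a] with t ht
  rw [max_eq_left ht]

/-- LaSalle's invariance principle for a semiflow sampled at time `τ`. -/
theorem tendsto_of_strictLyapunov {X : Type*} [TopologicalSpace X]
    {φ : ℝ → X → X} {V : X → ℝ} {x₀ xstar : X} {τ : ℝ} (hτ : 0 ≤ τ)
    (hsemi : ∀ x, ∀ s ≥ (0 : ℝ), ∀ t ≥ (0 : ℝ), φ (t + s) x = φ t (φ s x))
    (hφτ : Continuous (φ τ)) (hV : Continuous V)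
    (hanti : AntitoneOn (fun t => V (φ t x₀)) (Ici 0))
    (hdecr : ∀ z ≠ xstar, V (φ τ z) < V z)
    (hcpt : IsCompact (closure ((fun t => φ t x₀) '' Ici 0))) :
    Tendsto (fun t => φ t x₀) atTop (𝓝 xstar) := by
  set S := closure ((fun t => φ t x₀) '' Ici 0)
  have hmem : ∀ᶠ t in atTop, φ t x₀ ∈ S := by
    filter_upwards [eventually_ge_atTop 0] with t ht
    exact subset_closure (mem_image_of_mem _ ht)
  have hbdd : BddBelow ((fun t => V (φ t x₀)) '' Ici 0) := by
    refine (hcpt.bddBelow_image hV.continuousOn).mono ?_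
    rintro _ ⟨t, ht, rfl⟩
    exact mem_image_of_mem V (subset_closure (mem_image_of_mem _ ht))
  obtain ⟨L, hL⟩ := hanti.exists_tendsto_atTop hbdd
  have hshift : Tendsto (fun t => V (φ τ (φ t x₀))) atTop (𝓝 L) := by
    refine (hL.comp (tendsto_atTop_add_const_right _ τ tendsto_id)).congr' ?_
    filter_upwards [eventually_ge_atTop 0] with t ht
    simp only [Function.comp_apply, id, add_comm t τ, hsemi x₀ t ht τ hτ]
  refine hcpt.tendsto_nhds_of_unique_mapClusterPt hmem fun z _ hz => ?_
  have hVz : V z = L := (hz.continuousAt_comp hV.continuousAt).eq_of_tendsto hL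
  have hτz : MapClusterPt (φ τ z) atTop (fun t => φ τ (φ t x₀)) :=
    hz.continuousAt_comp hφτ.continuousAt
  have hVτz : V (φ τ z) = L := (hτz.continuousAt_comp hV.continuousAt).eq_of_tendsto hshift
  by_contra hne
  exact (hdecr z hne).ne (hVτz.trans hVz.symm)

section L1Dist

variable {ι : Type*} [Fintype ι]

def l1Dist (x y : ι → ℝ) : ℝ := ∑ i, |x i - y i|

theorem continuous_l1Dist_left (y : ι → ℝ) : Continuous fun x => l1Dist x y := by
  unfold l1Dist
  fun_prop

theorem dist_le_l1Dist (x y : ι → ℝ) : dist x y ≤ l1Dist x y :=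
  (dist_pi_le_iff (Finset.sum_nonneg fun _ _ => abs_nonneg _)).2 fun i =>
    (Real.dist_eq _ _).trans_le <|
      Finset.single_le_sum (f := fun j => |x j - y j|) (fun _ _ => abs_nonneg _) (Finset.mem_univ i)

theorem l1Dist_le_card_mul_dist (x y : ι → ℝ) : l1Dist x y ≤ Fintype.card ι * dist x y := by
  calc l1Dist x y ≤ ∑ _i : ι, dist x y :=
        Finset.sum_le_sum fun i _ =>
          (Real.dist_eq (x i) (y i)).symm.trans_le (dist_le_pi_dist x y i)
    _ = Fintype.card ι * dist x y := by simp

theorem continuous_of_l1Dist_le {f : (ι → ℝ) → ι → ℝ}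
    (hf : ∀ x y, l1Dist (f x) (f y) ≤ l1Dist x y) : Continuous f :=
  (LipschitzWith.of_dist_le_mul (K := ⟨Fintype.card ι, Nat.cast_nonneg _⟩) fun x y =>
    calc dist (f x) (f y) ≤ l1Dist (f x) (f y) := dist_le_l1Dist _ _
      _ ≤ l1Dist x y := hf x y
      _ ≤ Fintype.card ι * dist x y := l1Dist_le_card_mul_dist x y).continuous

end L1Dist

theorem stmt_6_general (n : ℕ)
    (φ : ℝ → (Fin n → ℝ) → (Fin n → ℝ))
    (hφ0 : ∀ x, φ 0 x = x)
    (hsemi : ∀ x, ∀ s ≥ (0 : ℝ), ∀ t ≥ (0 : ℝ), φ (t + s) x = φ t (φ s x))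
    (hmon : ∀ x y, AntitoneOn (fun t => ∑ i, |φ t x i - φ t y i|) (Set.Ici 0))
    (hstrict : ∀ x y, ∀ s t : ℝ, 0 ≤ s → s < t → φ s x ≠ φ s y →
      ∑ i, |φ t x i - φ t y i| < ∑ i, |φ s x i - φ s y i|)
    (xstar : Fin n → ℝ)
    (hfix : ∀ t ≥ (0 : ℝ), φ t xstar = xstar) :
    ∀ x₀ : Fin n → ℝ, Bornology.IsBounded ((fun t => φ t x₀) '' Set.Ici (0 : ℝ)) →
      Filter.Tendsto (fun t => φ t x₀) Filter.atTop (nhds xstar) := by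
  intro x₀ hbdd
  have hcontr : ∀ x y, l1Dist (φ 1 x) (φ 1 y) ≤ l1Dist x y := fun x y => by
    simpa only [l1Dist, hφ0] using hmon x y (mem_Ici.2 le_rfl) (mem_Ici.2 zero_le_one) zero_le_one
  refine tendsto_of_strictLyapunov (V := (l1Dist · xstar)) zero_le_one hsemi
    (continuous_of_l1Dist_le hcontr) (continuous_l1Dist_left xstar) ?_ ?_ hbdd.isCompact_closure
  · intro s hs t ht hst
    simpa only [l1Dist, hfix s hs, hfix t ht] using hmon x₀ xstar hs ht hst
  · intro z hz
    simpa only [l1Dist, hφ0, hfix 1 zero_le_one] using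
      hstrict z xstar 0 1 le_rfl one_pos (by rwa [hφ0, hφ0])

/-- Under a strict l1-contraction property of an order-preserving flow, every
bounded solution converges to the equilibrium. -/
theorem stmt_6 (n : ℕ) (K : NNReal)
    (g : (Fin n → ℝ) → (Fin n → ℝ)) (hg : LipschitzWith K g)
    (φ : ℝ → (Fin n → ℝ) → (Fin n → ℝ))
    (hφ0 : ∀ x, φ 0 x = x)
    (hφ : ∀ x, ∀ t ≥ (0 : ℝ), HasDerivAt (fun s => φ s x) (g (φ t x)) t)
    (hsemi : ∀ x, ∀ s ≥ (0 : ℝ), ∀ t ≥ (0 : ℝ), φ (t + s) x = φ t (φ s x))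
    (hord : ∀ x y, (∀ i, x i ≤ y i) → ∀ t ≥ (0 : ℝ), ∀ i, φ t x i ≤ φ t y i)
    (hmon : ∀ x y, AntitoneOn (fun t => ∑ i, |φ t x i - φ t y i|) (Set.Ici 0))
    (hstrict : ∀ x y, ∀ s t : ℝ, 0 ≤ s → s < t → φ s x ≠ φ s y →
      ∑ i, |φ t x i - φ t y i| < ∑ i, |φ s x i - φ s y i|)
    (xstar : Fin n → ℝ) (hxstar : g xstar = 0)
    (hfix : ∀ t ≥ (0 : ℝ), φ t xstar = xstar) :
    ∀ x₀ : Fin n → ℝ, Bornology.IsBounded ((fun t => φ t x₀) '' Set.Ici (0 : ℝ)) →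
      Filter.Tendsto (fun t => φ t x₀) Filter.atTop (nhds xstar) :=
  stmt_6_general n φ hφ0 hsemi hmon hstrict xstar hfix
end

section
/- Consider a dynamical flow network ρ̇_e = f^in_e(ρ) − f^out_e(ρ) on a finite directed graph with edge set E, cut structure as below, finite buffer capacities B_e < ∞, and a routing policy whose total outflow across any cut boundary satisfies ∑_{e ∈ ∂⁺_U} f^out_e(ρ) ≤ C_U and whose inflow into E⁺_U satisfies ∑_{e ∈ E⁺_U}(f^in_e(ρ) − f^out_e(ρ)) ≥ λ_U − C_U for all ρ in the domain. If λ_U > C_U for some cut U, then for every initial condition ρ° the first exit time κ(ρ°) from the open region ∏_e [0, B_e) satisfies κ(ρ°) ≤ (∑_{e ∈ E⁺_U}(B_e − ρ°_e)) / (λ_U − C_U). -/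
/-! The total density `∑_{e ∈ E⁺_U} ρ_e` grows at rate at least `λ_U − C_U > 0` while the state
stays in the box, and it can never exceed `∑_{e ∈ E⁺_U} B_e`; so the box must be left before the
linear lower bound reaches that ceiling. -/

open Set Finset

theorem HasDerivAt.finset_sum_apply {E : Type*} [Fintype E] {ρ : ℝ → E → ℝ} {ρ' : E → ℝ}
    {t : ℝ} (s : Finset E) (h : HasDerivAt ρ ρ' t) :
    HasDerivAt (fun τ => ∑ e ∈ s, ρ τ e) (∑ e ∈ s, ρ' e) t :=
  HasDerivAt.fun_sum fun e _ => hasDerivAt_pi.mp h e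

theorem mul_le_sub_of_le_deriv_on_Ico {g g' : ℝ → ℝ} {κ r : ℝ}
    (hg : ∀ t ∈ Ico 0 κ, HasDerivAt g (g' t) t) (hg' : ∀ t ∈ Ico 0 κ, r ≤ g' t) :
    ∀ t ∈ Ico 0 κ, r * t ≤ g t - g 0 := by
  intro t ht
  have key := (convex_Ico 0 κ).mul_sub_le_image_sub_of_le_deriv
    (fun s hs => (hg s hs).continuousAt.continuousWithinAt)
    (fun s hs => (hg s (interior_subset hs)).differentiableAt.differentiableWithinAt)
    (fun s hs => (hg s (interior_subset hs)).deriv ▸ hg' s (interior_subset hs))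
    0 ⟨le_rfl, ht.1.trans_lt ht.2⟩ t ht ht.1
  simpa using key

theorem le_div_of_le_deriv_of_le_on_Ico {g g' : ℝ → ℝ} {κ r G : ℝ} (hr : 0 < r)
    (hg0 : g 0 ≤ G) (hg : ∀ t ∈ Ico 0 κ, HasDerivAt g (g' t) t)
    (hg' : ∀ t ∈ Ico 0 κ, r ≤ g' t) (hG : ∀ t ∈ Ico 0 κ, g t ≤ G) :
    κ ≤ (G - g 0) / r := by
  refine le_of_forall_lt_imp_le_of_dense fun t htκ => ?_
  rcases lt_or_ge t 0 with ht0 | ht0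
  · exact ht0.le.trans (div_nonneg (sub_nonneg.mpr hg0) hr.le)
  · rw [le_div_iff₀ hr, mul_comm]
    linarith [mul_le_sub_of_le_deriv_on_Ico hg hg' t ⟨ht0, htκ⟩, hG t ⟨ht0, htκ⟩]

theorem stmt_10_general (E : Type*) [Fintype E]
    (Eplus bd : Finset E) (B C : E → ℝ) (lamU : ℝ)
    (fin fout : (E → ℝ) → E → ℝ)
    (hrate : ∀ ρ : E → ℝ, (∀ e, ρ e ∈ Set.Icc 0 (B e)) →
      lamU - ∑ e ∈ bd, C e ≤ ∑ e ∈ Eplus, (fin ρ e - fout ρ e))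
    (hover : ∑ e ∈ bd, C e < lamU)
    (ρ : ℝ → E → ℝ)
    (hρ : ∀ t ≥ (0 : ℝ), HasDerivAt ρ (fun e => fin (ρ t) e - fout (ρ t) e) t)
    (hρ0 : ∀ e, ρ 0 e ∈ Set.Ico 0 (B e))
    (κ : ℝ)
    (hκ : ∀ t ∈ Set.Ico 0 κ, ∀ e, ρ t e ∈ Set.Ico 0 (B e)) :
    κ ≤ (∑ e ∈ Eplus, (B e - ρ 0 e)) / (lamU - ∑ e ∈ bd, C e) := by
  rw [sum_sub_distrib]
  exact le_div_of_le_deriv_of_le_on_Ico (sub_pos.mpr hover)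
    (sum_le_sum fun e _ => (hρ0 e).2.le)
    (fun t ht => (hρ t ht.1).finset_sum_apply Eplus)
    (fun t ht => hrate (ρ t) fun e => Ico_subset_Icc_self (hκ t ht e))
    (fun t ht => sum_le_sum fun e _ => (hκ t ht e).2.le)

/-- Finite-buffer overload: if a cut constraint is violated, the exit time from
the open box of buffer capacities is bounded above. -/
theorem stmt_10 (E : Type*) [Fintype E]
    (Eplus bd : Finset E) (B C : E → ℝ) (lamU : ℝ)
    (fin fout : (E → ℝ) → E → ℝ)
    (hbd : ∀ ρ : E → ℝ, (∀ e, ρ e ∈ Set.Icc 0 (B e)) →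
      ∑ e ∈ bd, fout ρ e ≤ ∑ e ∈ bd, C e)
    (hrate : ∀ ρ : E → ℝ, (∀ e, ρ e ∈ Set.Icc 0 (B e)) →
      lamU - ∑ e ∈ bd, C e ≤ ∑ e ∈ Eplus, (fin ρ e - fout ρ e))
    (hover : ∑ e ∈ bd, C e < lamU)
    (ρ : ℝ → E → ℝ)
    (hρ : ∀ t ≥ (0 : ℝ), HasDerivAt ρ (fun e => fin (ρ t) e - fout (ρ t) e) t)
    (hρ0 : ∀ e, ρ 0 e ∈ Set.Ico 0 (B e))
    (κ : ℝ) (hκ0 : 0 ≤ κ)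
    (hκ : ∀ t ∈ Set.Ico 0 κ, ∀ e, ρ t e ∈ Set.Ico 0 (B e)) :
    κ ≤ (∑ e ∈ Eplus, (B e - ρ 0 e)) / (lamU - ∑ e ∈ bd, C e) :=
  stmt_10_general E Eplus bd B C lamU fin fout hrate hover ρ hρ hρ0 κ hκ
end
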